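/- arXiv:2301.04046 — 4 statements merged into one kernel-verified Lean document; each statement's English description precedes it below -/
import Mathlib

section
/- For every v ∈ H¹_{0,}(0,T) with ∂_t v = g ∈ L²(0,T), the function H_T v satisfies (H_T v)(t) = ∫_t^T (H_T^{-1} g)(s) ds for almost every t ∈ (0,T); equivalently, H_T v ∈ H¹_{,0}(0,T) and ∂_t(H_T v) = −H_T^{-1}(∂_t v) in L²(0,T). -/
open MeasureTheory Real Set
open scoped RealInnerProductSpace ENNReal

noncomputable section

/-- The measure on `(0,T)`. -/
def μT (T : ℝ) : Measure ℝ := volume.restrict (Set.Ioo 0 T)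

instance (T : ℝ) : IsFiniteMeasure (μT T) :=
  ⟨by simp [μT, Real.volume_Ioo]⟩

/-- `s_k(t) = √(2/T) sin((π/2 + kπ) t/T)`. -/
def sFun (T : ℝ) (k : ℕ) : ℝ → ℝ :=
  fun t => Real.sqrt (2 / T) * Real.sin ((Real.pi / 2 + k * Real.pi) * (t / T))

/-- `c_k(t) = √(2/T) cos((π/2 + kπ) t/T)`. -/
def cFun (T : ℝ) (k : ℕ) : ℝ → ℝ :=
  fun t => Real.sqrt (2 / T) * Real.cos ((Real.pi / 2 + k * Real.pi) * (t / T))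

lemma memLp_of_bounded_continuous {X : Type*} [NormedAddCommGroup X] {f : ℝ → X}
    (hf : Continuous f) (C : ℝ) (hC : ∀ t, ‖f t‖ ≤ C) (T : ℝ) :
    MemLp f 2 (μT T) :=
  MemLp.of_bound hf.aestronglyMeasurable C (ae_of_all _ hC)

lemma sFun_continuous (T : ℝ) (k : ℕ) : Continuous (sFun T k) := by
  unfold sFun; fun_prop

lemma cFun_continuous (T : ℝ) (k : ℕ) : Continuous (cFun T k) := by
  unfold cFun; fun_prop

lemma sFun_memLp (T : ℝ) (k : ℕ) : MemLp (sFun T k) 2 (μT T) := by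
  refine memLp_of_bounded_continuous (sFun_continuous T k) (Real.sqrt (2 / T)) (fun t => ?_) T
  rw [sFun, Real.norm_eq_abs, abs_mul, abs_of_nonneg (Real.sqrt_nonneg _)]
  exact mul_le_of_le_one_right (Real.sqrt_nonneg _) (Real.abs_sin_le_one _)

lemma cFun_memLp (T : ℝ) (k : ℕ) : MemLp (cFun T k) 2 (μT T) := by
  refine memLp_of_bounded_continuous (cFun_continuous T k) (Real.sqrt (2 / T)) (fun t => ?_) T
  rw [cFun, Real.norm_eq_abs, abs_mul, abs_of_nonneg (Real.sqrt_nonneg _)]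
  exact mul_le_of_le_one_right (Real.sqrt_nonneg _) (Real.abs_cos_le_one _)

/-- `s_k` as an element of `L²(0,T)`. -/
def sL (T : ℝ) (k : ℕ) : Lp ℝ 2 (μT T) := (sFun_memLp T k).toLp (sFun T k)

/-- `c_k` as an element of `L²(0,T)`. -/
def cL (T : ℝ) (k : ℕ) : Lp ℝ 2 (μT T) := (cFun_memLp T k).toLp (cFun T k)

/-- The modified Hilbert transformation `H_T` on `L²(0,T)`:
`H_T v = Σ_k ⟨v, s_k⟩ c_k`. -/
def HT (T : ℝ) (v : Lp ℝ 2 (μT T)) : Lp ℝ 2 (μT T) :=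
  ∑' k, (inner ℝ v (sL T k) : ℝ) • cL T k

/-- The inverse modified Hilbert transformation `H_T⁻¹` on `L²(0,T)`:
`H_T⁻¹ w = Σ_k ⟨w, c_k⟩ s_k`. -/
def HTinv (T : ℝ) (w : Lp ℝ 2 (μT T)) : Lp ℝ 2 (μT T) :=
  ∑' k, (inner ℝ w (cL T k) : ℝ) • sL T k

/-!
Let `J u (t) = ∫_t^T u`, a bounded operator on `L²(0,T)`. With `λ_k = π/2 + kπ` one computes
`J s_k = (T/λ_k) c_k`, and Fubini turns `⟨v, s_k⟩` into `⟨g, J s_k⟩ = (T/λ_k) ⟨g, c_k⟩`.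
Applying the continuous map `J` termwise to `H_T⁻¹ g = Σ ⟨g, c_k⟩ s_k` (summable by Bessel's
inequality for the orthonormal system `c_k`) therefore gives `Σ ⟨v, s_k⟩ c_k = H_T v`.
-/

lemma abs_setIntegral_le_mul_norm {α : Type*} [MeasurableSpace α] {μ : Measure α}
    [IsFiniteMeasure μ] (u : Lp ℝ 2 μ) {s : Set α}
    (hs : MeasurableSet s) : |∫ x in s, u x ∂μ| ≤ √(μ.real univ) * ‖u‖ := by
  rw [← L2.inner_indicatorConstLp_one hs (measure_ne_top μ s)]
  refine (abs_real_inner_le_norm _ _).trans (mul_le_mul_of_nonneg_right ?_ (norm_nonneg u))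
  refine norm_indicatorConstLp_le.trans ?_
  rw [norm_one, one_mul, ENNReal.toReal_ofNat, Real.sqrt_eq_rpow]
  exact Real.rpow_le_rpow measureReal_nonneg (measureReal_mono (subset_univ s)) (by norm_num)

theorem MeasureTheory.MemLp.inner_toLp_toLp {α : Type*} [MeasurableSpace α] {μ : Measure α}
    {f g : α → ℝ} (hf : MemLp f 2 μ) (hg : MemLp g 2 μ) :
    ⟪hf.toLp f, hg.toLp g⟫ = ∫ a, f a * g a ∂μ := by
  rw [L2.inner_def]
  refine integral_congr_ae ?_
  filter_upwards [hf.coeFn_toLp, hg.coeFn_toLp] with a hfa hga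
  rw [hfa, hga, real_inner_eq_re_inner, RCLike.inner_apply, conj_trivial, RCLike.re_to_real,
    mul_comm]

theorem Orthonormal.summable_inner_smul {𝕜 E ι : Type*} [RCLike 𝕜] [NormedAddCommGroup E]
    [InnerProductSpace 𝕜 E] [CompleteSpace E] {e f : ι → E} (he : Orthonormal 𝕜 e)
    (hf : Orthonormal 𝕜 f) (x : E) : Summable fun i => inner 𝕜 x (f i) • e i := by
  have h := (he.orthogonalFamily.summable_iff_norm_sq_summable fun i => inner 𝕜 x (f i)).mpr
    (by simpa only [norm_inner_symm] using hf.inner_products_summable (x := x))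
  simpa only [LinearIsometry.toSpanSingleton_apply] using h

section TailIntegral

variable {μ : Measure ℝ}

/- Integrating against `μ` itself, rather than Lebesgue measure over `t..T`, makes the value depend
only on the `μ`-a.e. class of `f`. -/
variable (μ) in
def tailIntegral (f : ℝ → ℝ) (t : ℝ) : ℝ := ∫ s in Ioi t, f s ∂μ

lemma tailIntegral_congr_ae {f g : ℝ → ℝ} (hfg : f =ᵐ[μ] g) :
    tailIntegral μ f = tailIntegral μ g :=
  funext fun _ => integral_congr_ae (ae_restrict_of_ae hfg)

lemma stronglyMeasurable_tailIntegral [SFinite μ] {f : ℝ → ℝ} (hf : StronglyMeasurable f) :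
    StronglyMeasurable (tailIntegral μ f) := by
  have hind : StronglyMeasurable fun p : ℝ × ℝ => {q | q.1 < q.2}.indicator (f ∘ Prod.snd) p :=
    (hf.comp_measurable measurable_snd).indicator (measurableSet_lt measurable_fst measurable_snd)
  convert hind.integral_prod_right' (ν := μ) using 2 with t
  rw [tailIntegral, ← integral_indicator measurableSet_Ioi]
  rfl

lemma memLp_tailIntegral [IsFiniteMeasure μ] (u : Lp ℝ 2 μ) :
    MemLp (tailIntegral μ u) 2 μ :=
  MemLp.of_bound (stronglyMeasurable_tailIntegral (Lp.stronglyMeasurable u)).aestronglyMeasurable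
    _ (ae_of_all _ fun _ => abs_setIntegral_le_mul_norm u measurableSet_Ioi)

lemma tailIntegral_add {f g : ℝ → ℝ} (hf : Integrable f μ) (hg : Integrable g μ) :
    tailIntegral μ (f + g) = tailIntegral μ f + tailIntegral μ g :=
  funext fun _ => integral_add hf.restrict hg.restrict

lemma tailIntegral_smul (c : ℝ) (f : ℝ → ℝ) :
    tailIntegral μ (c • f) = c • tailIntegral μ f :=
  funext fun _ => integral_const_mul c _

variable (μ) in
def tailIntegralCLM [IsFiniteMeasure μ] : Lp ℝ 2 μ →L[ℝ] Lp ℝ 2 μ :=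
  LinearMap.mkContinuousOfExistsBound
    { toFun := fun u => (memLp_tailIntegral u).toLp _
      map_add' := fun u v => by
        rw [← MemLp.toLp_add]
        refine MemLp.toLp_congr _ _ (.of_eq ?_)
        rw [tailIntegral_congr_ae (Lp.coeFn_add u v), tailIntegral_add
          ((Lp.memLp u).integrable one_le_two) ((Lp.memLp v).integrable one_le_two)]
      map_smul' := fun c u => by
        rw [RingHom.id_apply, ← MemLp.toLp_const_smul]
        refine MemLp.toLp_congr _ _ (.of_eq ?_)
        rw [tailIntegral_congr_ae (Lp.coeFn_smul c u), tailIntegral_smul] }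
    ⟨measureUnivNNReal μ ^ (2 : ℝ≥0∞).toReal⁻¹ * √(μ.real univ), fun u => by
      rw [mul_assoc]
      refine Lp.norm_le_of_ae_bound (by positivity) ?_
      filter_upwards [(memLp_tailIntegral u).coeFn_toLp] with t ht
      exact ht ▸ abs_setIntegral_le_mul_norm u measurableSet_Ioi⟩

lemma coeFn_tailIntegralCLM [IsFiniteMeasure μ] (u : Lp ℝ 2 μ) :
    tailIntegralCLM μ u =ᵐ[μ] tailIntegral μ u :=
  (memLp_tailIntegral u).coeFn_toLp

lemma integral_setIntegral_Iio_mul [SFinite μ] {f g : ℝ → ℝ} (hf : Integrable f μ)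
    (hg : Integrable g μ) :
    ∫ t, (∫ s in Iio t, f s ∂μ) * g t ∂μ = ∫ s, f s * tailIntegral μ g s ∂μ := by
  set Q : ℝ × ℝ → ℝ := {q | q.2 < q.1}.indicator fun q => g q.1 * f q.2
  have hQ : Integrable Q (μ.prod μ) :=
    (hg.mul_prod hf).indicator (measurableSet_lt measurable_snd measurable_fst)
  have hinner_left (t : ℝ) : ∫ s, Q (t, s) ∂μ = (∫ s in Iio t, f s ∂μ) * g t := by
    rw [← integral_mul_const, ← integral_indicator measurableSet_Iio]
    congr 1 with s
    by_cases hs : s < t <;> simp [Q, hs, mul_comm]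
  have hinner_right (s : ℝ) : ∫ t, Q (t, s) ∂μ = f s * tailIntegral μ g s := by
    rw [tailIntegral, ← integral_const_mul, ← integral_indicator measurableSet_Ioi]
    congr 1 with t
    by_cases ht : s < t <;> simp [Q, ht, mul_comm]
  simp_rw [← hinner_left, ← hinner_right]
  exact integral_integral_swap (f := fun t s => Q (t, s)) hQ

end TailIntegral

namespace ModifiedHilbert

lemma ae_mem_μT (T : ℝ) : ∀ᵐ t ∂μT T, t ∈ Ioo 0 T :=
  ae_restrict_mem measurableSet_Ioo

lemma integral_μT {T : ℝ} (hT : 0 ≤ T) (f : ℝ → ℝ) :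
    ∫ t, f t ∂μT T = ∫ t in (0 : ℝ)..T, f t := by
  rw [μT, intervalIntegral.integral_of_le hT, integral_Ioc_eq_integral_Ioo]

lemma setIntegral_Iio_μT {T t : ℝ} (ht : t ∈ Ioo 0 T) (f : ℝ → ℝ) :
    ∫ s in Iio t, f s ∂μT T = ∫ s in (0 : ℝ)..t, f s := by
  rw [μT, Measure.restrict_restrict measurableSet_Iio, Iio_inter_Ioo, min_eq_left ht.2.le,
    intervalIntegral.integral_of_le ht.1.le, integral_Ioc_eq_integral_Ioo]

lemma tailIntegral_μT {T t : ℝ} (ht : t ∈ Ioo 0 T) (f : ℝ → ℝ) :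
    tailIntegral (μT T) f t = ∫ s in t..T, f s := by
  rw [tailIntegral, μT, Measure.restrict_restrict measurableSet_Ioi, Ioi_inter_Ioo,
    max_eq_left ht.1.le, intervalIntegral.integral_of_le ht.2.le, integral_Ioc_eq_integral_Ioo]

def lam (k : ℕ) : ℝ := π / 2 + k * π

lemma lam_pos (k : ℕ) : 0 < lam k := by
  unfold lam; positivity

lemma cos_lam (k : ℕ) : cos (lam k) = 0 := by
  rw [lam, add_comm, cos_add_pi_div_two, sin_nat_mul_pi, neg_zero]

lemma sFun_eq (T : ℝ) (k : ℕ) (t : ℝ) : sFun T k t = √(2 / T) * sin (lam k / T * t) := by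
  rw [sFun, lam, mul_div_assoc', div_mul_eq_mul_div]

lemma cFun_eq (T : ℝ) (k : ℕ) (t : ℝ) : cFun T k t = √(2 / T) * cos (lam k / T * t) := by
  rw [cFun, lam, mul_div_assoc', div_mul_eq_mul_div]

lemma integral_sFun {T : ℝ} (hT : 0 < T) (k : ℕ) (t : ℝ) :
    ∫ s in t..T, sFun T k s = T / lam k * cFun T k t := by
  have hc : lam k / T ≠ 0 := div_ne_zero (lam_pos k).ne' hT.ne'
  simp only [sFun_eq, intervalIntegral.integral_const_mul]
  rw [intervalIntegral.integral_comp_mul_left (fun x => sin x) hc, div_mul_cancel₀ _ hT.ne',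
    integral_sin, cos_lam, cFun_eq]
  field_simp
  ring

lemma lam_sub_lam (j k : ℕ) : lam j - lam k = ((j - k : ℤ) : ℝ) * π := by
  rw [lam, lam]; push_cast; ring

lemma lam_add_lam (j k : ℕ) : lam j + lam k = ((j + k + 1 : ℤ) : ℝ) * π := by
  rw [lam, lam]; push_cast; ring

lemma integral_cos_int_mul_pi_div {T : ℝ} (hT : T ≠ 0) (m : ℤ) :
    ∫ t in (0 : ℝ)..T, cos (m * π / T * t) = if m = 0 then T else 0 := by
  split_ifs with hm
  · simp [hm]
  have hc : (m : ℝ) * π / T ≠ 0 := by positivity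
  rw [intervalIntegral.integral_comp_mul_left (fun x => cos x) hc, integral_cos,
    div_mul_cancel₀ _ hT, sin_int_mul_pi, mul_zero, sin_zero, sub_zero, smul_zero]

lemma integral_cos_lam_sub_lam {T : ℝ} (hT : T ≠ 0) (j k : ℕ) :
    ∫ t in (0 : ℝ)..T, cos ((lam j - lam k) / T * t) = if j = k then T else 0 := by
  rw [lam_sub_lam, integral_cos_int_mul_pi_div hT]
  exact if_congr (by omega) rfl rfl

lemma integral_cos_lam_add_lam {T : ℝ} (hT : T ≠ 0) (j k : ℕ) :
    ∫ t in (0 : ℝ)..T, cos ((lam j + lam k) / T * t) = 0 := by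
  rw [lam_add_lam, integral_cos_int_mul_pi_div hT, if_neg (by omega)]

lemma intervalIntegrable_cos_mul (a T : ℝ) :
    IntervalIntegrable (fun t => cos (a * t)) volume 0 T :=
  (continuous_cos.comp (continuous_const_mul a)).intervalIntegrable 0 T

lemma cFun_mul_cFun (T : ℝ) (j k : ℕ) (t : ℝ) :
    cFun T j t * cFun T k t = √(2 / T) ^ 2 / 2 *
      (cos ((lam j - lam k) / T * t) + cos ((lam j + lam k) / T * t)) := by
  rw [sub_div, add_div, sub_mul, add_mul, cos_sub, cos_add, cFun_eq, cFun_eq]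
  ring

lemma sFun_mul_sFun (T : ℝ) (j k : ℕ) (t : ℝ) :
    sFun T j t * sFun T k t = √(2 / T) ^ 2 / 2 *
      (cos ((lam j - lam k) / T * t) - cos ((lam j + lam k) / T * t)) := by
  rw [sub_div, add_div, sub_mul, add_mul, cos_sub, cos_add, sFun_eq, sFun_eq]
  ring

lemma orthonormal_cL {T : ℝ} (hT : 0 < T) : Orthonormal ℝ (cL T) := by
  rw [orthonormal_iff_ite]
  intro j k
  rw [cL, cL, MemLp.inner_toLp_toLp, integral_μT hT.le]
  simp_rw [cFun_mul_cFun]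
  rw [intervalIntegral.integral_const_mul, intervalIntegral.integral_add
    (intervalIntegrable_cos_mul _ T) (intervalIntegrable_cos_mul _ T),
    integral_cos_lam_sub_lam hT.ne', integral_cos_lam_add_lam hT.ne',
    sq_sqrt (by positivity)]
  split_ifs <;> field_simp <;> ring

lemma orthonormal_sL {T : ℝ} (hT : 0 < T) : Orthonormal ℝ (sL T) := by
  rw [orthonormal_iff_ite]
  intro j k
  rw [sL, sL, MemLp.inner_toLp_toLp, integral_μT hT.le]
  simp_rw [sFun_mul_sFun]
  rw [intervalIntegral.integral_const_mul, intervalIntegral.integral_sub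
    (intervalIntegrable_cos_mul _ T) (intervalIntegrable_cos_mul _ T),
    integral_cos_lam_sub_lam hT.ne', integral_cos_lam_add_lam hT.ne',
    sq_sqrt (by positivity)]
  split_ifs <;> field_simp <;> ring

lemma tailIntegralCLM_sL {T : ℝ} (hT : 0 < T) (k : ℕ) :
    tailIntegralCLM (μT T) (sL T k) = (T / lam k) • cL T k := by
  refine Lp.ext ?_
  filter_upwards [coeFn_tailIntegralCLM (sL T k), Lp.coeFn_smul (T / lam k) (cL T k),
    (cFun_memLp T k).coeFn_toLp, ae_mem_μT T] with t hJ hsmul hc ht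
  rw [hJ, hsmul, Pi.smul_apply, cL, hc, sL, tailIntegral_congr_ae (sFun_memLp T k).coeFn_toLp,
    tailIntegral_μT ht, integral_sFun hT, smul_eq_mul]

lemma inner_toLp_sL {T : ℝ} (hT : 0 < T) {v g : ℝ → ℝ} (hg : MemLp g 2 (μT T))
    (hv : ∀ t ∈ Ioo 0 T, v t = ∫ s in (0 : ℝ)..t, g s) (hvL : MemLp v 2 (μT T)) (k : ℕ) :
    ⟪hvL.toLp v, sL T k⟫ = T / lam k * ⟪hg.toLp g, cL T k⟫ := calc
  ⟪hvL.toLp v, sL T k⟫ = ∫ t, v t * sFun T k t ∂μT T := MemLp.inner_toLp_toLp _ _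
  _ = ∫ t, (∫ s in Iio t, g s ∂μT T) * sFun T k t ∂μT T := by
    refine integral_congr_ae ?_
    filter_upwards [ae_mem_μT T] with t ht
    rw [hv t ht, setIntegral_Iio_μT ht]
  _ = ∫ s, g s * tailIntegral (μT T) (sFun T k) s ∂μT T :=
    integral_setIntegral_Iio_mul (hg.integrable one_le_two)
      ((sFun_memLp T k).integrable one_le_two)
  _ = ∫ s, T / lam k * (g s * cFun T k s) ∂μT T := by
    refine integral_congr_ae ?_
    filter_upwards [ae_mem_μT T] with s hs
    rw [tailIntegral_μT hs, integral_sFun hT]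
    ring
  _ = T / lam k * ⟪hg.toLp g, cL T k⟫ := by
    rw [integral_const_mul, cL, MemLp.inner_toLp_toLp]

end ModifiedHilbert

open ModifiedHilbert in
/-- For `v ∈ H¹_{0,}(0,T)` with `∂_t v = g ∈ L²(0,T)`, one has
`(H_T v)(t) = ∫_t^T (H_T⁻¹ g)(s) ds` for a.e. `t ∈ (0,T)`; i.e. `H_T v ∈ H¹_{,0}(0,T)`
and `∂_t (H_T v) = - H_T⁻¹ (∂_t v)`. -/
theorem HT_commutes_with_derivative (T : ℝ) (hT : 0 < T) (v g : ℝ → ℝ)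
    (hg : MemLp g 2 (μT T))
    (hv : ∀ t ∈ Set.Ioo (0 : ℝ) T, v t = ∫ s in (0 : ℝ)..t, g s)
    (hvL : MemLp v 2 (μT T)) :
    ∀ᵐ t ∂(μT T),
      (HT T (hvL.toLp v) : ℝ → ℝ) t = ∫ s in t..T, (HTinv T (hg.toLp g) : ℝ → ℝ) s := by
  set J := tailIntegralCLM (μT T)
  have hHTinv : HasSum (fun k => ⟪hg.toLp g, cL T k⟫ • sL T k) (HTinv T (hg.toLp g)) :=
    ((orthonormal_sL hT).summable_inner_smul (orthonormal_cL hT) _).hasSum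
  have hJ : HasSum (fun k => ⟪hvL.toLp v, sL T k⟫ • cL T k) (J (HTinv T (hg.toLp g))) := by
    convert J.hasSum hHTinv using 2 with k
    rw [map_smul, tailIntegralCLM_sL hT, smul_smul, inner_toLp_sL hT hg hv hvL, mul_comm]
  have hHT : HT T (hvL.toLp v) = J (HTinv T (hg.toLp g)) := hJ.tsum_eq
  filter_upwards [coeFn_tailIntegralCLM (HTinv T (hg.toLp g)), ae_mem_μT T] with t hJt ht
  rw [hHT, hJt, tailIntegral_μT ht]
end
end

section
/- H_T maps H¹_{0,}(0,T) bijectively onto H¹_{,0}(0,T) and preserves the H¹ seminorm: for every v ∈ H¹_{0,}(0,T), H_T v ∈ H¹_{,0}(0,T) with ‖∂_t(H_T v)‖_{L²(0,T)} = ‖∂_t v‖_{L²(0,T)}, and every element of H¹_{,0}(0,T) is of the form H_T v for a unique v ∈ H¹_{0,}(0,T). -/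
open MeasureTheory Real Set
open scoped RealInnerProductSpace ENNReal

noncomputable section

/-- The subspace `H¹_{0,}(0,T)` of `L²(0,T)`: elements `v` with
`v(t) = ∫₀ᵗ g(s) ds` for some `g ∈ L²(0,T)`. -/
def H1zero (T : ℝ) : Set (Lp ℝ 2 (μT T)) :=
  {v | ∃ g : Lp ℝ 2 (μT T),
    ∀ᵐ t ∂(μT T), (v : ℝ → ℝ) t = ∫ s in (0 : ℝ)..t, (g : ℝ → ℝ) s}

/-- The subspace `H¹_{,0}(0,T)` of `L²(0,T)`: elements `w` with
`w(t) = ∫_t^T h(s) ds` for some `h ∈ L²(0,T)`. -/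
def H1terminal (T : ℝ) : Set (Lp ℝ 2 (μT T)) :=
  {w | ∃ h : Lp ℝ 2 (μT T),
    ∀ᵐ t ∂(μT T), (w : ℝ → ℝ) t = ∫ s in t..T, (h : ℝ → ℝ) s}

/-!
With `λ_k = π/2 + kπ`, the families `s_k` and `c_k` are both orthonormal bases of `L²(0,T)`, so
`H_T`, which maps the first onto the second, is unitary. Since `(T/λ_k) c_k` is the primitive of
`s_k` vanishing at `T` and `(T/λ_k) s_k` the primitive of `c_k` vanishing at `0`, integration by
parts gives `⟨∫₀ᵗ g, s_k⟩ = (T/λ_k) ⟨g, c_k⟩` and `⟨∫ₜᵀ h, c_k⟩ = (T/λ_k) ⟨h, s_k⟩`. Comparing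
coefficients in the cosine basis, `H_T (∫₀ᵗ g) = ∫ₜᵀ H_T⁻¹ g`, and `‖H_T⁻¹ g‖ = ‖g‖`.

Completeness is the main work. If `f ⊥ sin(λ_n t/T)` for all `n ∈ ℤ`, the identity
`2 sin(λ_n t/T) cos(πt/T) = sin(λ_{n+1} t/T) + sin(λ_{n-1} t/T)` shows that `f(t) sin(λ_0 t/T)` is
orthogonal to every power of `cos(πt/T)`, which is injective on `[0,T]`; by Stone–Weierstrass it
vanishes, hence so does `f`. The cosines are handled in the same way.
-/

section HilbertSpace

variable {α ι E : Type*} [MeasurableSpace α] {μ : Measure α}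
  [NormedAddCommGroup E] [InnerProductSpace ℝ E]

lemma inner_toLp_eq_integral (f : Lp ℝ 2 μ) {g : α → ℝ} (hg : MemLp g 2 μ) :
    ⟪f, hg.toLp g⟫ = ∫ a, f a * g a ∂μ := by
  rw [L2.inner_def]
  refine integral_congr_ae ?_
  filter_upwards [hg.coeFn_toLp] with a ha
  rw [ha, real_inner_eq_re_inner, RCLike.inner_apply]
  simp [mul_comm]

lemma inner_toLp_toLp_eq_integral {f g : α → ℝ} (hf : MemLp f 2 μ) (hg : MemLp g 2 μ) :
    ⟪hf.toLp f, hg.toLp g⟫ = ∫ a, f a * g a ∂μ := by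
  rw [inner_toLp_eq_integral]
  refine integral_congr_ae ?_
  filter_upwards [hf.coeFn_toLp] with a ha
  rw [ha]

lemma orthogonal_span_range_eq_bot {v : ι → E} (h : ∀ x, (∀ i, ⟪x, v i⟫ = 0) → x = 0) :
    (Submodule.span ℝ (range v))ᗮ = ⊥ :=
  (Submodule.eq_bot_iff _).mpr fun x hx => h x fun i =>
    Submodule.inner_left_of_mem_orthogonal (Submodule.subset_span (mem_range_self i)) hx

lemma HilbertBasis.tsum_inner_smul_eq_repr_symm_repr (b b' : HilbertBasis ι ℝ E) (v : E) :
    ∑' i, ⟪v, b i⟫ • b' i = b'.repr.symm (b.repr v) := by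
  simpa only [b.repr_apply_apply, real_inner_comm] using (b'.hasSum_repr_symm (b.repr v)).tsum_eq

lemma HilbertBasis.inner_repr_symm_repr (b b' : HilbertBasis ι ℝ E) (v : E) (i : ι) :
    ⟪b'.repr.symm (b.repr v), b' i⟫ = ⟪v, b i⟫ := by
  rw [real_inner_comm, ← b'.repr_apply_apply, LinearIsometryEquiv.apply_symm_apply,
    b.repr_apply_apply, real_inner_comm]

end HilbertSpace

section Moments

variable {μ : Measure ℝ} {a b : ℝ} {f : ℝ → ℝ}

def integralMulIccCLM (hab : a ≤ b) (hf : Integrable f μ) : C(Icc a b, ℝ) →L[ℝ] ℝ :=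
  LinearMap.mkContinuous
    { toFun := fun φ => ∫ t, f t * φ (projIcc a b hab t) ∂μ
      map_add' := fun φ ψ => by
        simp only [ContinuousMap.add_apply, mul_add]
        refine integral_add ?_ ?_ <;>
          exact hf.mul_bdd (by fun_prop) (ae_of_all _ fun t => ContinuousMap.norm_coe_le_norm _ _)
      map_smul' := fun c φ => by
        simp only [ContinuousMap.smul_apply, smul_eq_mul, RingHom.id_apply, mul_left_comm _ c]
        exact integral_const_mul c _ }
    (∫ t, ‖f t‖ ∂μ) fun φ => by
      rw [mul_comm, ← integral_const_mul]
      refine norm_integral_le_of_norm_le (hf.norm.const_mul _) (ae_of_all _ fun t => ?_)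
      rw [norm_mul, mul_comm]
      exact mul_le_mul_of_nonneg_right (φ.norm_coe_le_norm _) (norm_nonneg _)

/-- By Stone–Weierstrass the polynomials in `u` are dense in `C([a, b])`, and integration
against `f` is continuous there. -/
theorem ae_eq_zero_of_integral_mul_pow_eq_zero (hab : a ≤ b) (hμ : ∀ᵐ t ∂μ, t ∈ Icc a b)
    {u : ℝ → ℝ} (hf : Integrable f μ) (hu : ContinuousOn u (Icc a b)) (hinj : InjOn u (Icc a b))
    (h : ∀ m : ℕ, ∫ t, f t * u t ^ m ∂μ = 0) : f =ᵐ[μ] 0 := by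
  let Λ := integralMulIccCLM hab hf
  have hΛ (φ : C(Icc a b, ℝ)) (g : ℝ → ℝ) (hφg : ∀ t (ht : t ∈ Icc a b), φ ⟨t, ht⟩ = g t) :
      Λ φ = ∫ t, f t * g t ∂μ := by
    refine integral_congr_ae ?_
    filter_upwards [hμ] with t ht
    simp [projIcc_of_mem hab ht, hφg t ht]
  let uX : C(Icc a b, ℝ) := ⟨(Icc a b).domRestrict u, hu.domRestrict⟩
  let A := Algebra.adjoin ℝ {uX}
  have hA_dense : A.topologicalClosure = ⊤ := by
    refine ContinuousMap.subalgebra_topologicalClosure_eq_top_of_separatesPoints A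
      fun x y hxy => ⟨uX, ⟨uX, Algebra.subset_adjoin rfl, rfl⟩, fun hu => hxy ?_⟩
    exact Subtype.ext (hinj x.2 y.2 hu)
  have hA_ker : Subalgebra.toSubmodule A ≤ LinearMap.ker (Λ : C(Icc a b, ℝ) →ₗ[ℝ] ℝ) := by
    rw [Algebra.adjoin_eq_span, Submodule.span_le]
    intro φ hφ
    obtain ⟨m, rfl⟩ := Submonoid.mem_closure_singleton.mp hφ
    exact (hΛ _ (u · ^ m) fun t ht => rfl).trans (h m)
  have hΛ_zero (φ : C(Icc a b, ℝ)) : Λ φ = 0 := by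
    have hφ : φ ∈ closure (A : Set C(Icc a b, ℝ)) := by
      rw [← Subalgebra.topologicalClosure_coe, hA_dense]; trivial
    exact closure_minimal hA_ker Λ.isClosed_ker hφ
  refine ae_eq_zero_of_integral_contDiff_smul_eq_zero hf.locallyIntegrable fun g hg _ => ?_
  let gX : C(Icc a b, ℝ) := ⟨(Icc a b).domRestrict g, hg.continuous.continuousOn.domRestrict⟩
  simpa only [smul_eq_mul, mul_comm] using (hΛ gX g fun t ht => rfl).symm.trans (hΛ_zero gX)

theorem integral_mul_mul_pow_eq_zero_of_recurrence {α : Type*} [MeasurableSpace α]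
    {μ : Measure α} {f c : α → ℝ} {e : ℤ → α → ℝ} (hf : Integrable f μ)
    (he : ∀ n, AEStronglyMeasurable (e n) μ) (hc : AEStronglyMeasurable c μ)
    (he_le : ∀ n x, ‖e n x‖ ≤ 1) (hc_le : ∀ x, ‖c x‖ ≤ 1)
    (hrec : ∀ n x, 2 * (e n x * c x) = e (n + 1) x + e (n - 1) x)
    (h : ∀ n, ∫ x, f x * e n x ∂μ = 0) (m : ℕ) (n : ℤ) :
    ∫ x, f x * (e n x * c x ^ m) ∂μ = 0 := by
  have hint (m : ℕ) (k : ℤ) : Integrable (fun x => f x * (e k x * c x ^ m)) μ :=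
    hf.mul_bdd ((he k).mul (hc.pow m)) <| ae_of_all _ fun x => by
      rw [norm_mul, norm_pow]
      exact mul_le_one₀ (he_le k x) (by positivity) (pow_le_one₀ (norm_nonneg _) (hc_le x))
  induction m generalizing n with
  | zero => simpa using h n
  | succ m ih =>
    have hsplit (x : α) : f x * (e n x * c x ^ (m + 1))
        = (f x * (e (n + 1) x * c x ^ m) + f x * (e (n - 1) x * c x ^ m)) / 2 := by
      rw [← mul_add, ← add_mul, ← hrec]; ring
    simp_rw [hsplit]
    rw [integral_div, integral_add (hint m (n + 1)) (hint m (n - 1)), ih, ih, add_zero, zero_div]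

theorem ae_eq_zero_of_integral_mul_eq_zero_of_recurrence (hab : a ≤ b)
    (hμ : ∀ᵐ t ∂μ, t ∈ Icc a b) {c : ℝ → ℝ} {e : ℤ → ℝ → ℝ} (hf : Integrable f μ)
    (he : ∀ n, AEStronglyMeasurable (e n) μ) (hc : Continuous c)
    (he_le : ∀ n t, ‖e n t‖ ≤ 1) (hc_le : ∀ t, ‖c t‖ ≤ 1)
    (hrec : ∀ n t, 2 * (e n t * c t) = e (n + 1) t + e (n - 1) t) (hc_inj : InjOn c (Icc a b))
    (he₀ : ∀ᵐ t ∂μ, e 0 t ≠ 0) (h : ∀ n, ∫ t, f t * e n t ∂μ = 0) : f =ᵐ[μ] 0 := by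
  have hfe : (fun t => f t * e 0 t) =ᵐ[μ] 0 := by
    refine ae_eq_zero_of_integral_mul_pow_eq_zero hab hμ
      (hf.mul_bdd (he 0) (ae_of_all _ (he_le 0))) hc.continuousOn hc_inj fun m => ?_
    simpa only [mul_assoc] using
      integral_mul_mul_pow_eq_zero_of_recurrence hf he hc.aestronglyMeasurable he_le hc_le hrec h m 0
  filter_upwards [hfe, he₀] with t hft he₀t
  exact (mul_eq_zero.mp hft).resolve_right he₀t

end Moments

theorem integral_primitive_mul {g φ : ℝ → ℝ} {a b : ℝ} (hg : IntervalIntegrable g volume a b)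
    (hφ : IntervalIntegrable φ volume a b) :
    ∫ t in a..b, (∫ s in a..t, g s) * φ t = ∫ t in a..b, g t * ∫ s in t..b, φ s := by
  have hG := hg.absolutelyContinuousOnInterval_intervalIntegral left_mem_uIcc
  have hΦ := hφ.absolutelyContinuousOnInterval_intervalIntegral right_mem_uIcc
  have hparts := hG.integral_mul_deriv_eq_deriv_mul hΦ
  simp only [intervalIntegral.integral_same, zero_mul, mul_zero, sub_zero, zero_sub] at hparts
  have hderiv {f : ℝ → ℝ} {c : ℝ} (hf : IntervalIntegrable f volume a b) (hc : c ∈ uIcc a b) :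
      ∀ᵐ t, t ∈ uIoc a b → deriv (fun x => ∫ s in c..x, f s) t = f t := by
    filter_upwards [hf.ae_hasDerivAt_integral] with t ht htab
    exact (ht (uIoc_subset_uIcc htab) c hc).deriv
  have hφ' : ∫ t in a..b, (∫ s in a..t, g s) * deriv (fun x => ∫ s in b..x, φ s) t
      = ∫ t in a..b, (∫ s in a..t, g s) * φ t := by
    refine intervalIntegral.integral_congr_ae ?_
    filter_upwards [hderiv hφ right_mem_uIcc] with t ht htab
    rw [ht htab]
  have hg' : ∫ t in a..b, deriv (fun x => ∫ s in a..x, g s) t * ∫ s in b..t, φ s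
      = ∫ t in a..b, g t * ∫ s in b..t, φ s := by
    refine intervalIntegral.integral_congr_ae ?_
    filter_upwards [hderiv hg left_mem_uIcc] with t ht htab
    rw [ht htab]
  rw [← hφ', hparts, hg', ← intervalIntegral.integral_neg]
  congr 1 with t
  rw [intervalIntegral.integral_symm b t, mul_neg]

section Interval

variable {T : ℝ}

lemma integral_μT (hT : 0 ≤ T) (f : ℝ → ℝ) : ∫ t, f t ∂μT T = ∫ t in 0..T, f t := by
  rw [μT, intervalIntegral.integral_of_le hT, integral_Ioc_eq_integral_Ioo]

lemma ae_mem_Ioo_μT (T : ℝ) : ∀ᵐ t ∂μT T, t ∈ Ioo 0 T :=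
  self_mem_ae_restrict measurableSet_Ioo

lemma integrableOn_Icc_of_integrable_μT {f : ℝ → ℝ} (hf : Integrable f (μT T)) :
    IntegrableOn f (Icc 0 T) :=
  (integrableOn_Icc_iff_integrableOn_Ioo).mpr hf

lemma intervalIntegrable_of_integrable_μT {f : ℝ → ℝ} (hT : 0 ≤ T) (hf : Integrable f (μT T)) :
    IntervalIntegrable f volume 0 T :=
  (intervalIntegrable_iff_integrableOn_Icc_of_le hT).mpr (integrableOn_Icc_of_integrable_μT hf)

lemma memLp_μT_of_continuousOn {f : ℝ → ℝ} (hf : ContinuousOn f (Icc 0 T)) (p : ℝ≥0∞) :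
    MemLp f p (μT T) := by
  obtain ⟨C, hC⟩ := isCompact_Icc.exists_bound_of_continuousOn hf
  refine MemLp.of_bound ((hf.mono Ioo_subset_Icc_self).aestronglyMeasurable measurableSet_Ioo) C ?_
  filter_upwards [ae_mem_Ioo_μT T] with t ht
  exact hC t (Ioo_subset_Icc_self ht)

lemma memLp_primitive (hT : 0 ≤ T) {g : ℝ → ℝ} (hg : Integrable g (μT T)) :
    MemLp (fun t => ∫ s in 0..t, g s) 2 (μT T) := by
  refine memLp_μT_of_continuousOn ?_ 2
  rw [← uIcc_of_le hT]
  exact intervalIntegral.continuousOn_primitive_interval (by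
    rw [uIcc_of_le hT]; exact integrableOn_Icc_of_integrable_μT hg)

lemma memLp_coprimitive (hT : 0 ≤ T) {h : ℝ → ℝ} (hh : Integrable h (μT T)) :
    MemLp (fun t => ∫ s in t..T, h s) 2 (μT T) := by
  refine memLp_μT_of_continuousOn ?_ 2
  rw [← uIcc_of_le hT]
  exact intervalIntegral.continuousOn_primitive_interval_left (by
    rw [uIcc_of_le hT]; exact integrableOn_Icc_of_integrable_μT hh)

end Interval

section Modes

variable {T : ℝ}

/-- Indexed by `ℤ` so that the recurrence `freq (n ± 1) = freq n ± π` stays in the index set;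
negative indices only repeat the modes up to sign, as `freq (-n-1) = -freq n`. -/
def freq (n : ℤ) : ℝ := π / 2 + n * π

lemma freq_pos (k : ℕ) : 0 < freq k := by
  simp only [freq, Int.cast_natCast]; positivity

lemma freq_add_one (n : ℤ) : freq (n + 1) = freq n + π := by
  simp only [freq]; push_cast; ring

lemma freq_sub_one (n : ℤ) : freq (n - 1) = freq n - π := by
  simp only [freq]; push_cast; ring

lemma freq_negSucc (k : ℕ) : freq (Int.negSucc k) = -freq k := by
  simp only [freq, Int.cast_negSucc]; push_cast; ring

lemma freq_zero_div_mul_mem_Ioo (hT : 0 < T) {t : ℝ} (ht : t ∈ Ioo 0 T) :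
    freq 0 / T * t ∈ Ioo 0 (π / 2) := by
  simp only [freq, Int.cast_zero, zero_mul, add_zero]
  refine ⟨by have := ht.1; positivity, ?_⟩
  calc π / 2 / T * t < π / 2 / T * T := by gcongr; exact ht.2
    _ = π / 2 := div_mul_cancel₀ _ hT.ne'

lemma sFun_eq (T : ℝ) (k : ℕ) (t : ℝ) : sFun T k t = √(2 / T) * sin (freq k / T * t) := by
  simp only [sFun, freq, Int.cast_natCast]; ring_nf

lemma cFun_eq (T : ℝ) (k : ℕ) (t : ℝ) : cFun T k t = √(2 / T) * cos (freq k / T * t) := by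
  simp only [cFun, freq, Int.cast_natCast]; ring_nf

lemma sFun_zero (T : ℝ) (k : ℕ) : sFun T k 0 = 0 := by
  simp [sFun_eq]

lemma cFun_self (hT : T ≠ 0) (k : ℕ) : cFun T k T = 0 := by
  rw [cFun_eq, div_mul_cancel₀ _ hT, freq, cos_add, Int.cast_natCast, sin_nat_mul_pi]
  simp

lemma hasDerivAt_sFun (T : ℝ) (k : ℕ) (t : ℝ) :
    HasDerivAt (sFun T k) (freq k / T * cFun T k t) t := by
  rw [funext (sFun_eq T k), cFun_eq]
  exact ((((hasDerivAt_id t).const_mul (freq k / T)).sin).const_mul (√(2 / T))).congr_deriv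
    (by simp only [mul_one, id]; ring)

lemma hasDerivAt_cFun (T : ℝ) (k : ℕ) (t : ℝ) :
    HasDerivAt (cFun T k) (-(freq k / T) * sFun T k t) t := by
  rw [funext (cFun_eq T k), sFun_eq]
  exact ((((hasDerivAt_id t).const_mul (freq k / T)).cos).const_mul (√(2 / T))).congr_deriv
    (by simp only [mul_one, id]; ring)

lemma integral_sFun (hT : T ≠ 0) (k : ℕ) (s : ℝ) :
    ∫ t in s..T, sFun T k t = T / freq k * cFun T k s := by
  have hderiv (t : ℝ) : HasDerivAt (fun t => -(T / freq k) * cFun T k t) (sFun T k t) t := by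
    refine ((hasDerivAt_cFun T k t).const_mul _).congr_deriv ?_
    field_simp [(freq_pos k).ne']
  rw [intervalIntegral.integral_eq_sub_of_hasDerivAt (fun t _ => hderiv t)
    (Continuous.intervalIntegrable (by unfold sFun; fun_prop) _ _), cFun_self hT]
  ring

lemma integral_cFun (hT : T ≠ 0) (k : ℕ) (s : ℝ) :
    ∫ t in 0..s, cFun T k t = T / freq k * sFun T k s := by
  have hderiv (t : ℝ) : HasDerivAt (fun t => T / freq k * sFun T k t) (cFun T k t) t := by
    refine ((hasDerivAt_sFun T k t).const_mul _).congr_deriv ?_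
    field_simp [(freq_pos k).ne']
  rw [intervalIntegral.integral_eq_sub_of_hasDerivAt (fun t _ => hderiv t)
    (Continuous.intervalIntegrable (by unfold cFun; fun_prop) _ _), sFun_zero]
  ring

lemma integral_cos_int_mul (hT : T ≠ 0) (n : ℤ) :
    ∫ t in 0..T, cos (n * π / T * t) = if n = 0 then T else 0 := by
  split_ifs with hn
  · simp [hn]
  · have hc : (n : ℝ) * π / T ≠ 0 := by have := pi_pos.ne'; positivity
    rw [intervalIntegral.integral_comp_mul_left (fun x => cos x) hc, integral_cos,
      div_mul_cancel₀ _ hT, sin_int_mul_pi]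
    simp

lemma integral_sin_freq_mul_sin_freq (hT : T ≠ 0) (j k : ℕ) :
    ∫ t in 0..T, sin (freq j / T * t) * sin (freq k / T * t) = if j = k then T / 2 else 0 := by
  have hprod (t : ℝ) : sin (freq j / T * t) * sin (freq k / T * t)
      = (cos (((j - k : ℤ) : ℝ) * π / T * t) - cos (((j + k + 1 : ℤ) : ℝ) * π / T * t)) / 2 := by
    have h₁ : ((j - k : ℤ) : ℝ) * π / T * t = freq j / T * t - freq k / T * t := by
      simp only [freq]; push_cast; ring
    have h₂ : ((j + k + 1 : ℤ) : ℝ) * π / T * t = freq j / T * t + freq k / T * t := by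
      simp only [freq]; push_cast; ring
    rw [h₁, h₂, cos_sub, cos_add]; ring
  simp_rw [hprod]
  rw [intervalIntegral.integral_div, intervalIntegral.integral_sub
    (Continuous.intervalIntegrable (by fun_prop) _ _) (Continuous.intervalIntegrable (by fun_prop) _ _),
    integral_cos_int_mul hT, integral_cos_int_mul hT, if_neg (show (j + k + 1 : ℤ) ≠ 0 by omega)]
  simp only [sub_eq_zero, Nat.cast_inj]
  split_ifs <;> ring

lemma integral_cos_freq_mul_cos_freq (hT : T ≠ 0) (j k : ℕ) :
    ∫ t in 0..T, cos (freq j / T * t) * cos (freq k / T * t) = if j = k then T / 2 else 0 := by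
  have hprod (t : ℝ) : cos (freq j / T * t) * cos (freq k / T * t)
      = (cos (((j - k : ℤ) : ℝ) * π / T * t) + cos (((j + k + 1 : ℤ) : ℝ) * π / T * t)) / 2 := by
    have h₁ : ((j - k : ℤ) : ℝ) * π / T * t = freq j / T * t - freq k / T * t := by
      simp only [freq]; push_cast; ring
    have h₂ : ((j + k + 1 : ℤ) : ℝ) * π / T * t = freq j / T * t + freq k / T * t := by
      simp only [freq]; push_cast; ring
    rw [h₁, h₂, cos_sub, cos_add]; ring
  simp_rw [hprod]
  rw [intervalIntegral.integral_div, intervalIntegral.integral_add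
    (Continuous.intervalIntegrable (by fun_prop) _ _) (Continuous.intervalIntegrable (by fun_prop) _ _),
    integral_cos_int_mul hT, integral_cos_int_mul hT, if_neg (show (j + k + 1 : ℤ) ≠ 0 by omega)]
  simp only [sub_eq_zero, Nat.cast_inj]
  split_ifs <;> ring

lemma orthonormal_sL (hT : 0 < T) : Orthonormal ℝ (sL T) := by
  refine orthonormal_iff_ite.mpr fun j k => ?_
  have hsq : √(2 / T) * √(2 / T) = 2 / T := mul_self_sqrt (by positivity)
  simp_rw [sL, inner_toLp_toLp_eq_integral, integral_μT hT.le, sFun_eq, mul_mul_mul_comm _ (sin _),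
    hsq, intervalIntegral.integral_const_mul, integral_sin_freq_mul_sin_freq hT.ne']
  split_ifs
  · field_simp
  · simp

lemma orthonormal_cL (hT : 0 < T) : Orthonormal ℝ (cL T) := by
  refine orthonormal_iff_ite.mpr fun j k => ?_
  have hsq : √(2 / T) * √(2 / T) = 2 / T := mul_self_sqrt (by positivity)
  simp_rw [cL, inner_toLp_toLp_eq_integral, integral_μT hT.le, cFun_eq, mul_mul_mul_comm _ (cos _),
    hsq, intervalIntegral.integral_const_mul, integral_cos_freq_mul_cos_freq hT.ne']
  split_ifs
  · field_simp
  · simp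

lemma inner_sL (f : Lp ℝ 2 (μT T)) (k : ℕ) :
    ⟪f, sL T k⟫ = √(2 / T) * ∫ t, f t * sin (freq k / T * t) ∂μT T := by
  simp_rw [sL, inner_toLp_eq_integral, sFun_eq, mul_left_comm _ (√(2 / T))]
  exact integral_const_mul _ _

lemma inner_cL (f : Lp ℝ 2 (μT T)) (k : ℕ) :
    ⟪f, cL T k⟫ = √(2 / T) * ∫ t, f t * cos (freq k / T * t) ∂μT T := by
  simp_rw [cL, inner_toLp_eq_integral, cFun_eq, mul_left_comm _ (√(2 / T))]
  exact integral_const_mul _ _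

lemma injOn_cos_pi_div_mul (hT : 0 < T) : InjOn (fun t => cos (π / T * t)) (Icc 0 T) := by
  have hmaps : MapsTo (fun t => π / T * t) (Icc 0 T) (Icc 0 π) := fun t ht =>
    ⟨by have := ht.1; positivity, by
      calc π / T * t ≤ π / T * T := by gcongr; exact ht.2
        _ = π := div_mul_cancel₀ _ hT.ne'⟩
  exact injOn_cos.comp ((mul_right_injective₀ (by positivity)).injOn) hmaps

lemma eq_zero_of_forall_inner_sL (hT : 0 < T) {f : Lp ℝ 2 (μT T)}
    (h : ∀ k, ⟪f, sL T k⟫ = 0) : f = 0 := by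
  have hsq : √(2 / T) ≠ 0 := (sqrt_pos.mpr (by positivity)).ne'
  have hnat (k : ℕ) : ∫ t, f t * sin (freq k / T * t) ∂μT T = 0 :=
    (mul_eq_zero.mp ((inner_sL f k).symm.trans (h k))).resolve_left hsq
  refine Lp.eq_zero_iff_ae_eq_zero.mpr <|
    ae_eq_zero_of_integral_mul_eq_zero_of_recurrence hT.le
      ((ae_mem_Ioo_μT T).mono fun t ht => Ioo_subset_Icc_self ht)
      ((Lp.memLp f).integrable one_le_two)
      (e := fun n t => sin (freq n / T * t)) (fun n => by fun_prop) (by fun_prop)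
      (fun n t => by simpa using abs_sin_le_one _) (fun t => by simpa using abs_cos_le_one _)
      (fun n t => ?_) (injOn_cos_pi_div_mul hT) ?_ fun n => ?_
  · rw [freq_add_one, freq_sub_one, add_div, sub_div, add_mul, sub_mul, sin_add, sin_sub]
    ring
  · filter_upwards [ae_mem_Ioo_μT T] with t ht
    have ⟨h₀, hπ⟩ := freq_zero_div_mul_mem_Ioo hT ht
    exact (sin_pos_of_pos_of_lt_pi h₀ (by linarith [pi_pos])).ne'
  · cases n with
    | ofNat k => exact hnat k
    | negSucc k => simpa [freq_negSucc, neg_div, sin_neg, integral_neg] using hnat k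

lemma eq_zero_of_forall_inner_cL (hT : 0 < T) {f : Lp ℝ 2 (μT T)}
    (h : ∀ k, ⟪f, cL T k⟫ = 0) : f = 0 := by
  have hsq : √(2 / T) ≠ 0 := (sqrt_pos.mpr (by positivity)).ne'
  have hnat (k : ℕ) : ∫ t, f t * cos (freq k / T * t) ∂μT T = 0 :=
    (mul_eq_zero.mp ((inner_cL f k).symm.trans (h k))).resolve_left hsq
  refine Lp.eq_zero_iff_ae_eq_zero.mpr <|
    ae_eq_zero_of_integral_mul_eq_zero_of_recurrence hT.le
      ((ae_mem_Ioo_μT T).mono fun t ht => Ioo_subset_Icc_self ht)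
      ((Lp.memLp f).integrable one_le_two)
      (e := fun n t => cos (freq n / T * t)) (fun n => by fun_prop) (by fun_prop)
      (fun n t => by simpa using abs_cos_le_one _) (fun t => by simpa using abs_cos_le_one _)
      (fun n t => ?_) (injOn_cos_pi_div_mul hT) ?_ fun n => ?_
  · rw [freq_add_one, freq_sub_one, add_div, sub_div, add_mul, sub_mul, cos_add, cos_sub]
    ring
  · filter_upwards [ae_mem_Ioo_μT T] with t ht
    have ⟨h₀, hπ⟩ := freq_zero_div_mul_mem_Ioo hT ht
    exact (cos_pos_of_mem_Ioo ⟨by linarith [pi_pos], hπ⟩).ne'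
  · cases n with
    | ofNat k => exact hnat k
    | negSucc k => simpa [freq_negSucc, neg_div, cos_neg] using hnat k

def sineBasis (hT : 0 < T) : HilbertBasis ℕ ℝ (Lp ℝ 2 (μT T)) :=
  HilbertBasis.mkOfOrthogonalEqBot (orthonormal_sL hT)
    (orthogonal_span_range_eq_bot fun _ => eq_zero_of_forall_inner_sL hT)

def cosineBasis (hT : 0 < T) : HilbertBasis ℕ ℝ (Lp ℝ 2 (μT T)) :=
  HilbertBasis.mkOfOrthogonalEqBot (orthonormal_cL hT)
    (orthogonal_span_range_eq_bot fun _ => eq_zero_of_forall_inner_cL hT)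

lemma coe_sineBasis (hT : 0 < T) : ⇑(sineBasis hT) = sL T :=
  HilbertBasis.coe_mkOfOrthogonalEqBot _ _

lemma coe_cosineBasis (hT : 0 < T) : ⇑(cosineBasis hT) = cL T :=
  HilbertBasis.coe_mkOfOrthogonalEqBot _ _

end Modes

section ModifiedHilbertTransform

variable {T : ℝ} (hT : 0 < T)
include hT

lemma HT_eq (v : Lp ℝ 2 (μT T)) : HT T v = (cosineBasis hT).repr.symm ((sineBasis hT).repr v) := by
  rw [HT, ← coe_sineBasis hT, ← coe_cosineBasis hT]
  exact HilbertBasis.tsum_inner_smul_eq_repr_symm_repr _ _ v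

lemma HTinv_eq (w : Lp ℝ 2 (μT T)) :
    HTinv T w = (sineBasis hT).repr.symm ((cosineBasis hT).repr w) := by
  rw [HTinv, ← coe_sineBasis hT, ← coe_cosineBasis hT]
  exact HilbertBasis.tsum_inner_smul_eq_repr_symm_repr _ _ w

lemma HTinv_HT (v : Lp ℝ 2 (μT T)) : HTinv T (HT T v) = v := by
  simp [HT_eq hT, HTinv_eq hT]

lemma norm_HTinv (w : Lp ℝ 2 (μT T)) : ‖HTinv T w‖ = ‖w‖ := by
  simp [HTinv_eq hT]

lemma inner_HT_cL (v : Lp ℝ 2 (μT T)) (k : ℕ) : ⟪HT T v, cL T k⟫ = ⟪v, sL T k⟫ := by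
  rw [HT_eq hT, ← coe_sineBasis hT, ← coe_cosineBasis hT]
  exact (sineBasis hT).inner_repr_symm_repr _ v k

lemma inner_HTinv_sL (w : Lp ℝ 2 (μT T)) (k : ℕ) : ⟪HTinv T w, sL T k⟫ = ⟪w, cL T k⟫ := by
  rw [HTinv_eq hT, ← coe_sineBasis hT, ← coe_cosineBasis hT]
  exact (cosineBasis hT).inner_repr_symm_repr _ w k

lemma HT_injective : Function.Injective (HT T) :=
  Function.LeftInverse.injective (HTinv_HT hT)

lemma eq_of_forall_inner_cL {x y : Lp ℝ 2 (μT T)} (h : ∀ k, ⟪x, cL T k⟫ = ⟪y, cL T k⟫) :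
    x = y :=
  sub_eq_zero.mp <| eq_zero_of_forall_inner_cL hT fun k => by rw [inner_sub_left, h, sub_self]

lemma inner_sL_of_primitive {v g : Lp ℝ 2 (μT T)}
    (hv : ∀ᵐ t ∂μT T, v t = ∫ s in 0..t, g s) (k : ℕ) :
    ⟪v, sL T k⟫ = T / freq k * ⟪g, cL T k⟫ := by
  rw [sL, cL, inner_toLp_eq_integral, inner_toLp_eq_integral, ← integral_const_mul]
  calc ∫ t, v t * sFun T k t ∂μT T = ∫ t, (∫ s in 0..t, g s) * sFun T k t ∂μT T := by
        refine integral_congr_ae ?_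
        filter_upwards [hv] with t ht
        rw [ht]
    _ = ∫ t in 0..T, g t * ∫ s in t..T, sFun T k s := by
        rw [integral_μT hT.le]
        exact integral_primitive_mul (intervalIntegrable_of_integrable_μT hT.le
          ((Lp.memLp g).integrable one_le_two)) (Continuous.intervalIntegrable (by unfold sFun; fun_prop) _ _)
    _ = ∫ t, T / freq k * (g t * cFun T k t) ∂μT T := by
        simp_rw [integral_μT hT.le, integral_sFun hT.ne', mul_left_comm]

lemma inner_cL_of_coprimitive {w h : Lp ℝ 2 (μT T)}
    (hw : ∀ᵐ t ∂μT T, w t = ∫ s in t..T, h s) (k : ℕ) :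
    ⟪w, cL T k⟫ = T / freq k * ⟪h, sL T k⟫ := by
  rw [sL, cL, inner_toLp_eq_integral, inner_toLp_eq_integral, ← integral_const_mul]
  calc ∫ t, w t * cFun T k t ∂μT T = ∫ t, cFun T k t * (∫ s in t..T, h s) ∂μT T := by
        refine integral_congr_ae ?_
        filter_upwards [hw] with t ht
        rw [ht, mul_comm]
    _ = ∫ t in 0..T, (∫ s in 0..t, cFun T k s) * h t := by
        rw [integral_μT hT.le]
        exact (integral_primitive_mul (Continuous.intervalIntegrable (by unfold cFun; fun_prop) _ _)
          (intervalIntegrable_of_integrable_μT hT.le ((Lp.memLp h).integrable one_le_two))).symm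
    _ = ∫ t, T / freq k * (h t * sFun T k t) ∂μT T := by
        simp_rw [integral_μT hT.le, integral_cFun hT.ne', mul_comm (h _), mul_assoc]

theorem HT_of_primitive {v g : Lp ℝ 2 (μT T)} (hv : ∀ᵐ t ∂μT T, v t = ∫ s in 0..t, g s) :
    ∀ᵐ t ∂μT T, HT T v t = ∫ s in t..T, HTinv T g s := by
  have hw := memLp_coprimitive hT.le ((Lp.memLp (HTinv T g)).integrable one_le_two)
  have hHT : HT T v = hw.toLp _ := eq_of_forall_inner_cL hT fun k => by
    rw [inner_HT_cL hT, inner_sL_of_primitive hT hv, inner_cL_of_coprimitive hT hw.coeFn_toLp,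
      inner_HTinv_sL hT]
  rw [hHT]
  exact hw.coeFn_toLp

end ModifiedHilbertTransform

/-- `H_T` maps `H¹_{0,}(0,T)` bijectively onto `H¹_{,0}(0,T)` and
preserves the `H¹` seminorm: if `∂_t v = g` then `H_T v(t) = ∫_t^T h` with
`‖h‖ = ‖g‖` (so `‖∂_t(H_T v)‖ = ‖∂_t v‖`). -/
theorem HT_bijective_H1_seminorm_preserving (T : ℝ) (hT : 0 < T) :
    (∀ v ∈ H1zero T, HT T v ∈ H1terminal T) ∧
    (∀ v g : Lp ℝ 2 (μT T),
      (∀ᵐ t ∂(μT T), (v : ℝ → ℝ) t = ∫ s in (0 : ℝ)..t, (g : ℝ → ℝ) s) →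
      ∃ h : Lp ℝ 2 (μT T),
        (∀ᵐ t ∂(μT T), (HT T v : ℝ → ℝ) t = ∫ s in t..T, (h : ℝ → ℝ) s) ∧
        ‖h‖ = ‖g‖) ∧
    Set.BijOn (HT T) (H1zero T) (H1terminal T) := by
  have hseminorm : ∀ v g : Lp ℝ 2 (μT T), (∀ᵐ t ∂μT T, v t = ∫ s in 0..t, g s) →
      ∃ h : Lp ℝ 2 (μT T), (∀ᵐ t ∂μT T, HT T v t = ∫ s in t..T, h s) ∧ ‖h‖ = ‖g‖ :=
    fun v g hv => ⟨HTinv T g, HT_of_primitive hT hv, norm_HTinv hT g⟩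
  have hmaps : ∀ v ∈ H1zero T, HT T v ∈ H1terminal T := fun v ⟨g, hv⟩ =>
    (hseminorm v g hv).imp fun _ => And.left
  refine ⟨hmaps, hseminorm, hmaps, (HT_injective hT).injOn, ?_⟩
  rintro w ⟨h, hw⟩
  have hv := memLp_primitive hT.le ((Lp.memLp (HT T h)).integrable one_le_two)
  refine ⟨hv.toLp _, ⟨HT T h, hv.coeFn_toLp⟩, Lp.ext ?_⟩
  filter_upwards [HT_of_primitive hT hv.coeFn_toLp, hw] with t hHT hwt
  rw [hHT, HTinv_HT hT, hwt]

end
end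

section
/- Let N_t, N_x ∈ ℕ. Let A_t, M_t ∈ ℝ^{N_t×N_t} satisfy xᵀA_t x > 0 and xᵀM_t x > 0 for all x ∈ ℝ^{N_t} with x ≠ 0 (no symmetry assumed), let M_x ∈ ℝ^{N_x×N_x} be symmetric positive definite, and let A_x ∈ ℝ^{N_x×N_x} be symmetric positive semidefinite. Then the matrix K = A_t ⊗ M_x + M_t ⊗ A_x satisfies zᵀKz > 0 for all z ∈ ℝ^{N_t N_x} with z ≠ 0; in particular, K is invertible, so the linear system K𝒜 = 𝒥 of the space-time Galerkin–Bubnov finite element method is uniquely solvable. -/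
/-!
The quadratic form of `K` only sees its symmetric part `K + Kᵀ`. Since `M_x` and `A_x` are
symmetric, `K + Kᵀ = (A_t + A_tᵀ) ⊗ M_x + (M_t + M_tᵀ) ⊗ A_x`, where `A_t + A_tᵀ` and
`M_t + M_tᵀ` are symmetric positive definite. Kronecker products of positive (semi)definite
matrices are positive (semi)definite, so `K + Kᵀ` is positive definite. A matrix with a positive
quadratic form has trivial kernel, hence is invertible.
-/

open scoped Kronecker
open Matrix

namespace Matrix

variable {m n R : Type*}

theorem IsSymm.kronecker_add_transpose [Distrib R] {A : Matrix m m R} {S : Matrix n n R}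
    (hS : S.IsSymm) : A ⊗ₖ S + (A ⊗ₖ S)ᵀ = (A + Aᵀ) ⊗ₖ S := by
  rw [← kroneckerMap_transpose, hS.eq, add_kronecker]

variable [Fintype n]

theorem dotProduct_add_transpose_mulVec [CommSemiring R] (A : Matrix n n R) (x : n → R) :
    x ⬝ᵥ (A + Aᵀ) *ᵥ x = 2 * (x ⬝ᵥ A *ᵥ x) := by
  rw [add_mulVec, dotProduct_add, dotProduct_transpose_mulVec, two_mul]

theorem posDef_add_transpose_iff [Field R] [LinearOrder R] [IsStrictOrderedRing R] [StarRing R]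
    [TrivialStar R] {A : Matrix n n R} :
    (A + Aᵀ).PosDef ↔ ∀ x : n → R, x ≠ 0 → 0 < x ⬝ᵥ A *ᵥ x := by
  have hherm : (A + Aᵀ).IsHermitian := by
    rw [isHermitian_iff_isSymm, IsSymm, transpose_add, transpose_transpose, add_comm]
  simp only [posDef_iff_dotProduct_mulVec, star_trivial, dotProduct_add_transpose_mulVec,
    hherm, true_and, zero_lt_two, mul_pos_iff_of_pos_left]

theorem isUnit_of_dotProduct_mulVec_pos [DecidableEq n] [Field R] [PartialOrder R]
    {A : Matrix n n R} (hA : ∀ x : n → R, x ≠ 0 → 0 < x ⬝ᵥ A *ᵥ x) : IsUnit A := by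
  rw [← mulVec_injective_iff_isUnit]
  intro x y hxy
  by_contra hne
  have hpos := hA (x - y) (sub_ne_zero.mpr hne)
  rw [mulVec_sub, hxy, sub_self, dotProduct_zero] at hpos
  exact hpos.false

end Matrix

/-- If `A_t, M_t` are positive definite (not necessarily
symmetric), `M_x` is symmetric positive definite and `A_x` is symmetric positive
semidefinite, then `K = A_t ⊗ M_x + M_t ⊗ A_x` satisfies `zᵀKz > 0` for `z ≠ 0`;
in particular `K` is invertible and the linear system `K𝒜 = 𝒥` of the space-time
Galerkin–Bubnov finite element method is uniquely solvable. -/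
theorem galerkin_bubnov_system_uniquely_solvable (Nt Nx : ℕ)
    (At Mt : Matrix (Fin Nt) (Fin Nt) ℝ)
    (Mx Ax : Matrix (Fin Nx) (Fin Nx) ℝ)
    (hAt : ∀ x : Fin Nt → ℝ, x ≠ 0 → 0 < x ⬝ᵥ At.mulVec x)
    (hMt : ∀ x : Fin Nt → ℝ, x ≠ 0 → 0 < x ⬝ᵥ Mt.mulVec x)
    (hMx : Mx.PosDef) (hAx : Ax.PosSemidef) :
    (∀ z : Fin Nt × Fin Nx → ℝ, z ≠ 0 →
      0 < z ⬝ᵥ (At ⊗ₖ Mx + Mt ⊗ₖ Ax).mulVec z) ∧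
    IsUnit (At ⊗ₖ Mx + Mt ⊗ₖ Ax) ∧
    (∀ 𝒥 : Fin Nt × Fin Nx → ℝ,
      ∃! 𝒜 : Fin Nt × Fin Nx → ℝ, (At ⊗ₖ Mx + Mt ⊗ₖ Ax).mulVec 𝒜 = 𝒥) := by
  have hsymmPart : (At ⊗ₖ Mx + Mt ⊗ₖ Ax + (At ⊗ₖ Mx + Mt ⊗ₖ Ax)ᵀ).PosDef := by
    rw [transpose_add, add_add_add_comm,
      (isHermitian_iff_isSymm.mp hMx.isHermitian).kronecker_add_transpose,
      (isHermitian_iff_isSymm.mp hAx.isHermitian).kronecker_add_transpose]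
    exact ((posDef_add_transpose_iff.mpr hAt).kronecker hMx).add_posSemidef
      ((posDef_add_transpose_iff.mpr hMt).posSemidef.kronecker hAx)
  have hpos := posDef_add_transpose_iff.mp hsymmPart
  have hunit := isUnit_of_dotProduct_mulVec_pos hpos
  exact ⟨hpos, hunit, fun 𝒥 =>
    (Function.Bijective.existsUnique
      ⟨mulVec_injective_iff_isUnit.mpr hunit, mulVec_surjective_iff_isUnit.mpr hunit⟩ 𝒥)⟩
end

section
/- Let h > 0 and let ω ⊂ ℝ² be the open triangle with vertices (0,0), (h,0), (0,h) (an isosceles right triangle with legs of length h, area |ω| = h²/2). For every a ∈ ℝ² and b ∈ ℝ, define P(x₁,x₂) = a + b·(−x₂, x₁)ᵀ, a generic element of the lowest-order Nédélec space of the first kind on ω; its scalar curl is curl P = ∂_{x₁}P₂ − ∂_{x₂}P₁ = 2b. Then the inverse inequality ∫_ω (curl P(x))² dx ≤ 18·|ω|^{-1}·∫_ω |P(x)|² dx holds, i.e. ‖curl_x P‖²_{L²(ω)} ≤ c_I · h_ω^{-2} · ‖P‖²_{L²(ω)} with constant c_I = 18 and local mesh size h_ω = |ω|^{1/2}. -/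
/-!
Both sides are explicit polynomials in `a`, `b`, `h`: by Fubini over the triangle,
`∫_ω |P|² = |a|² h²/2 + (a₂ - a₁) b h³/3 + b² h⁴/6`, while `∫_ω (curl P)² = 2 b² h²`
and `|ω| = h²/2`. Hence `18 |ω|⁻¹ ∫_ω |P|² - ∫_ω (curl P)² = 2 ((3 a₁ - b h)² + (3 a₂ + b h)²)`.
-/

open MeasureTheory Set

theorem setIntegral_regionBetween {E : Type*} [NormedAddCommGroup E] [NormedSpace ℝ E]
    {μ : Measure ℝ} [SFinite μ] {f g : ℝ → ℝ} {s : Set ℝ}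
    (hf : Measurable f) (hg : Measurable g) (hs : MeasurableSet s) {F : ℝ × ℝ → E}
    (hF : IntegrableOn F (regionBetween f g s) (μ.prod volume)) :
    ∫ p in regionBetween f g s, F p ∂μ.prod volume =
      ∫ x in s, (∫ y in Ioo (f x) (g x), F (x, y)) ∂μ := by
  have hm := measurableSet_regionBetween hf hg hs
  rw [← integral_indicator hm, integral_prod _ ((integrable_indicator_iff hm).2 hF),
    ← integral_indicator hs]
  congr 1 with x
  by_cases hx : x ∈ s
  · rw [indicator_of_mem hx, ← integral_indicator measurableSet_Ioo]
    congr 1 with y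
    simp [regionBetween, indicator, hx]
  · simp [regionBetween, indicator, hx]

theorem integral_cubic (c₀ c₁ c₂ c₃ b : ℝ) :
    ∫ x in (0 : ℝ)..b, (c₀ + c₁ * x + c₂ * x ^ 2 + c₃ * x ^ 3) =
      c₀ * b + c₁ * b ^ 2 / 2 + c₂ * b ^ 3 / 3 + c₃ * b ^ 4 / 4 := by
  simp (disch := (apply Continuous.intervalIntegrable; fun_prop)) only [
    intervalIntegral.integral_add, intervalIntegral.integral_const_mul, integral_pow,
    intervalIntegral.integral_const, smul_eq_mul]
  rw [intervalIntegral.integral_const_mul, integral_id]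
  ring

def rightIsoscelesTriangle (h : ℝ) : Set (ℝ × ℝ) :=
  {p | 0 < p.1 ∧ 0 < p.2 ∧ p.1 + p.2 < h}

theorem rightIsoscelesTriangle_eq_regionBetween (h : ℝ) :
    rightIsoscelesTriangle h = regionBetween (fun _ ↦ 0) (fun x ↦ h - x) (Ioo 0 h) := by
  ext ⟨x, y⟩
  simp only [rightIsoscelesTriangle, regionBetween, mem_ofPred_eq, mem_Ioo]
  constructor
  · rintro ⟨hx, hy, hxy⟩; exact ⟨⟨hx, by linarith⟩, hy, by linarith⟩
  · rintro ⟨⟨hx, -⟩, hy, hxy⟩; exact ⟨hx, hy, by linarith⟩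

theorem integral_rightIsoscelesTriangle {E : Type*} [NormedAddCommGroup E] [NormedSpace ℝ E]
    {h : ℝ} (hh : 0 ≤ h) {F : ℝ × ℝ → E} (hF : Continuous F) :
    ∫ p in rightIsoscelesTriangle h, F p =
      ∫ x in (0 : ℝ)..h, ∫ y in (0 : ℝ)..h - x, F (x, y) := by
  have hbdd : rightIsoscelesTriangle h ⊆ Icc (0, 0) (h, h) := fun p ⟨h1, h2, h12⟩ ↦
    ⟨⟨h1.le, h2.le⟩, ⟨by linarith, by linarith⟩⟩
  have hint : IntegrableOn F (rightIsoscelesTriangle h) :=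
    (hF.continuousOn.integrableOn_compact isCompact_Icc).mono_set hbdd
  rw [rightIsoscelesTriangle_eq_regionBetween, Measure.volume_eq_prod] at hint ⊢
  rw [setIntegral_regionBetween measurable_const (by fun_prop) measurableSet_Ioo hint,
    intervalIntegral.integral_of_le hh, integral_Ioc_eq_integral_Ioo]
  refine setIntegral_congr_fun measurableSet_Ioo fun x hx ↦ ?_
  rw [intervalIntegral.integral_of_le (by linarith [hx.2]), integral_Ioc_eq_integral_Ioo]

theorem measureReal_rightIsoscelesTriangle {h : ℝ} (hh : 0 ≤ h) :
    volume.real (rightIsoscelesTriangle h) = h ^ 2 / 2 := by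
  simpa [intervalIntegral.integral_comp_sub_left fun x ↦ x] using
    integral_rightIsoscelesTriangle hh (F := fun _ ↦ (1 : ℝ)) continuous_const

theorem integral_nedelec_sq_rightIsoscelesTriangle {h : ℝ} (hh : 0 ≤ h) (a : ℝ × ℝ) (b : ℝ) :
    ∫ x in rightIsoscelesTriangle h, ((a.1 - b * x.2) ^ 2 + (a.2 + b * x.1) ^ 2) =
      (a.1 ^ 2 + a.2 ^ 2) * h ^ 2 / 2 + (a.2 - a.1) * b * h ^ 3 / 3 + b ^ 2 * h ^ 4 / 6 := by
  have slice (x : ℝ) : ∫ y in (0 : ℝ)..h - x, ((a.1 - b * y) ^ 2 + (a.2 + b * x) ^ 2) =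
      ((a.1 ^ 2 + a.2 ^ 2) * h - a.1 * b * h ^ 2 + b ^ 2 * h ^ 3 / 3)
        + (2 * (a.1 + a.2) * b * h - (a.1 ^ 2 + a.2 ^ 2) - b ^ 2 * h ^ 2) * x
        + (2 * b ^ 2 * h - 2 * a.2 * b - a.1 * b) * x ^ 2 + (-(4 / 3) * b ^ 2) * x ^ 3 := by
    calc _ = ∫ y in (0 : ℝ)..h - x,
          ((a.1 ^ 2 + (a.2 + b * x) ^ 2) + (-2 * a.1 * b) * y + b ^ 2 * y ^ 2 + 0 * y ^ 3) := by
          congr 1 with y; ring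
      _ = _ := by rw [integral_cubic]; ring
  rw [integral_rightIsoscelesTriangle hh (by fun_prop)]
  simp only [slice, integral_cubic]
  ring

/-- Inverse inequality with constant `c_I = 18` for the
lowest-order Nédélec element `P(x₁,x₂) = a + b·(−x₂,x₁)ᵀ` (whose scalar curl is
`curl P = 2b`) on the isosceles right triangle `ω` with vertices `(0,0)`, `(h,0)`,
`(0,h)`: the area is `|ω| = h²/2` and
`‖curl_x P‖²_{L²(ω)} ≤ 18 · |ω|⁻¹ · ‖P‖²_{L²(ω)}`. -/
theorem nedelec_inverse_inequality_isosceles_right_triangle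
    (h : ℝ) (hh : 0 < h) (a : ℝ × ℝ) (b : ℝ)
    (ω : Set (ℝ × ℝ))
    (hω : ω = {p : ℝ × ℝ | 0 < p.1 ∧ 0 < p.2 ∧ p.1 + p.2 < h}) :
    (volume ω).toReal = h ^ 2 / 2 ∧
    (∫ x in ω, (2 * b) ^ 2) ≤
      18 * ((volume ω).toReal)⁻¹ *
        ∫ x in ω, ((a.1 - b * x.2) ^ 2 + (a.2 + b * x.1) ^ 2) := by
  obtain rfl : ω = rightIsoscelesTriangle h := hω
  have area : (volume (rightIsoscelesTriangle h)).toReal = h ^ 2 / 2 :=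
    measureReal_rightIsoscelesTriangle hh.le
  refine ⟨area, ?_⟩
  rw [setIntegral_const, smul_eq_mul, integral_nedelec_sq_rightIsoscelesTriangle hh.le,
    measureReal_def, area]
  field_simp
  nlinarith [sq_nonneg (3 * a.1 - b * h), sq_nonneg (3 * a.2 + b * h)]
end
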